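/- Let P and Q be F-programs and (I,J) the ID-well-founded model of P. If P^{I,J} ⊆ Q ⊆ P, then P and Q have the same ID-well-founded model. -/

import Mathlib

inductive Formula (α : Type) : Type 1
  | atom : α → Formula α
  | conj : {ι : Type} → (ι → Formula α) → Formula α
  | disj : {ι : Type} → (ι → Formula α) → Formula α
  | impl : Formula α → Formula α → Formula α

namespace Formula

def fbot {α : Type} : Formula α := .disj (fun i : Empty => i.elim)
def ftop {α : Type} : Formula α := .conj (fun i : Empty => i.elim)

def Sat {α : Type} (I : Set α) : Formula α → Prop
  | .atom a => a ∈ I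
  | .conj f => ∀ i, Sat I (f i)
  | .disj f => ∃ i, Sat I (f i)
  | .impl F G => Sat I F → Sat I G

open Classical in
noncomputable def reduct {α : Type} (I : Set α) : Bool → Formula α → Formula α
  | true, .atom a => .atom a
  | false, .atom a => if a ∈ I then ftop else fbot
  | pol, .conj f => .conj (fun i => reduct I pol (f i))
  | pol, .disj f => .disj (fun i => reduct I pol (f i))
  | true, .impl F G => .impl (reduct I false F) (reduct I true G)
  | false, .impl F G => .impl (reduct I true F) (reduct I false G)

def atomsPol {α : Type} : Bool → Formula α → Set α
  | true, .atom a => {a}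
  | false, .atom _ => ∅
  | pol, .conj f => ⋃ i, atomsPol pol (f i)
  | pol, .disj f => ⋃ i, atomsPol pol (f i)
  | pol, .impl F G => atomsPol (!pol) F ∪ atomsPol pol G

def Positive {α : Type} (F : Formula α) : Prop := atomsPol false F = ∅

open Classical in
noncomputable def freduct {α : Type} (X : Set α) : Formula α → Formula α
  | .atom a => if a ∈ X then .atom a else fbot
  | .conj f => if Sat X (.conj f) then .conj (fun i => freduct X (f i)) else fbot
  | .disj f => if Sat X (.disj f) then .disj (fun i => freduct X (f i)) else fbot
  | .impl F G => if Sat X (.impl F G) then .impl (freduct X F) (freduct X G) else fbot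

def noImpl {α : Type} : Formula α → Prop
  | .atom _ => True
  | .conj f => ∀ i, noImpl (f i)
  | .disj f => ∀ i, noImpl (f i)
  | .impl _ _ => False

def inR {α : Type} : Formula α → Prop
  | .atom _ => True
  | .conj f => ∀ i, inR (f i)
  | .disj f => ∀ i, inR (f i)
  | .impl F G => noImpl F ∧ inR G

end Formula

open Formula

structure Rule (α : Type) : Type 1 where
  head : α
  body : Formula α

abbrev Program (α : Type) := Set (Rule α)

def Tstep {α : Type} (P : Program α) (X : Set α) : Set α :=
  {a | ∃ r ∈ P, r.head = a ∧ Sat X r.body}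

noncomputable def progReduct {α : Type} (P : Program α) (I : Set α) : Program α :=
  (fun r => ⟨r.head, reduct I true r.body⟩) '' P

noncomputable def stableOp {α : Type} (P : Program α) (I : Set α) : Set α :=
  ⋂₀ {X | Tstep (progReduct P I) X ⊆ X}

def precLe {α : Type} (p q : Set α × Set α) : Prop := p.1 ⊆ q.1 ∧ q.2 ⊆ p.2

noncomputable def wfOp {α : Type} (P : Program α) (p : Set α × Set α) : Set α × Set α :=
  (stableOp P p.2, stableOp P p.1)

noncomputable def IsWFModel {α : Type} (P : Program α) (p : Set α × Set α) : Prop :=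
  wfOp P p = p ∧ ∀ q, wfOp P q = q → precLe p q

def IsModel {α : Type} (P : Program α) (X : Set α) : Prop :=
  ∀ r ∈ P, Sat X r.body → r.head ∈ X

noncomputable def freductProg {α : Type} (P : Program α) (X : Set α) : Program α :=
  (fun r => ⟨r.head, freduct X r.body⟩) '' P

noncomputable def StableModel {α : Type} (P : Program α) (X : Set α) : Prop :=
  IsModel (freductProg P X) X ∧ ∀ Y, IsModel (freductProg P X) Y → Y ⊆ X → Y = X

noncomputable def simpProg {α : Type} (P : Program α) (I J : Set α) : Program α :=
  {r | r ∈ P ∧ Sat J (reduct I true r.body)}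

noncomputable def relStable {α : Type} (P : Program α) (Ir J : Set α) : Set α :=
  ⋂₀ {X | Tstep (progReduct P J) (Ir ∪ X) ⊆ X}

noncomputable def relWF {α : Type} (P : Program α) (r p : Set α × Set α) : Set α × Set α :=
  (relStable P r.1 (p.2 ∪ r.2), relStable P r.2 (p.1 ∪ r.1))

open OrderDual

variable {α : Type}

namespace Formula

theorem sat_ftop (X : Set α) : Sat X ftop := fun i => i.elim

theorem not_sat_fbot (X : Set α) : ¬ Sat X fbot := fun ⟨i, _⟩ => i.elim

theorem sat_reduct_of_subset {Y W A B : Set α} (hYW : Y ⊆ W) (hAB : A ⊆ B) (F : Formula α) :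
    (Sat Y (reduct B true F) → Sat W (reduct A true F)) ∧
      (Sat W (reduct A false F) → Sat Y (reduct B false F)) := by
  induction F with
  | atom a =>
    refine ⟨fun h => hYW h, fun h => ?_⟩
    simp only [reduct] at h ⊢
    by_cases ha : a ∈ A
    · simpa only [if_pos (hAB ha)] using sat_ftop Y
    · exact absurd (by simpa only [if_neg ha] using h) (not_sat_fbot W)
  | conj f ih => exact ⟨fun h i => (ih i).1 (h i), fun h i => (ih i).2 (h i)⟩
  | disj f ih =>
    exact ⟨fun ⟨i, h⟩ => ⟨i, (ih i).1 h⟩, fun ⟨i, h⟩ => ⟨i, (ih i).2 h⟩⟩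
  | impl F G ihF ihG =>
    exact ⟨fun h hF => ihG.1 (h (ihF.2 hF)), fun h hF => ihG.2 (h (ihF.1 hF))⟩

theorem sat_reduct_mono {Y W : Set α} (hYW : Y ⊆ W) (K : Set α) {F : Formula α}
    (h : Sat Y (reduct K true F)) : Sat W (reduct K true F) :=
  (sat_reduct_of_subset hYW subset_rfl F).1 h

theorem sat_reduct_anti {A B : Set α} (X : Set α) (hAB : A ⊆ B) {F : Formula α}
    (h : Sat X (reduct B true F)) : Sat X (reduct A true F) :=
  (sat_reduct_of_subset subset_rfl hAB F).1 h

end Formula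

theorem mem_tstep_progReduct {P : Program α} {K X : Set α} {a : α} :
    a ∈ Tstep (progReduct P K) X ↔ ∃ r ∈ P, r.head = a ∧ Sat X (reduct K true r.body) := by
  simp only [Tstep, progReduct, Set.mem_ofPred_eq, Set.exists_mem_image]

theorem tstep_progReduct_mono {P : Program α} {K X Y : Set α} (hXY : X ⊆ Y) :
    Tstep (progReduct P K) X ⊆ Tstep (progReduct P K) Y := by
  intro a ha
  obtain ⟨r, hr, rfl, hsat⟩ := mem_tstep_progReduct.1 ha
  exact mem_tstep_progReduct.2 ⟨r, hr, rfl, sat_reduct_mono hXY K hsat⟩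

theorem stableOp_subset {P : Program α} {K X : Set α}
    (h : Tstep (progReduct P K) X ⊆ X) : stableOp P K ⊆ X :=
  Set.sInter_subset_of_mem h

theorem tstep_stableOp_subset (P : Program α) (K : Set α) :
    Tstep (progReduct P K) (stableOp P K) ⊆ stableOp P K :=
  fun _ ha _ hX => hX (tstep_progReduct_mono (stableOp_subset hX) ha)

theorem stableOp_mono {P Q : Program α} (hPQ : P ⊆ Q) (K : Set α) :
    stableOp P K ⊆ stableOp Q K := by
  refine stableOp_subset fun a ha => tstep_stableOp_subset Q K ?_
  obtain ⟨r, hr, rfl, hsat⟩ := mem_tstep_progReduct.1 ha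
  exact mem_tstep_progReduct.2 ⟨r, hPQ hr, rfl, hsat⟩

theorem stableOp_anti (P : Program α) {K L : Set α} (hKL : K ⊆ L) :
    stableOp P L ⊆ stableOp P K := by
  refine stableOp_subset fun a ha => tstep_stableOp_subset P K ?_
  obtain ⟨r, hr, rfl, hsat⟩ := mem_tstep_progReduct.1 ha
  exact mem_tstep_progReduct.2 ⟨r, hr, rfl, sat_reduct_anti _ hKL hsat⟩

/-- Every rule used to derive an atom of `S_P(K)` has its body true in `S_P(K) ⊆ J` under the
`K`-reduct, hence under the coarser `I`-reduct: it belongs to `P^{I,J}`. -/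
theorem stableOp_subset_simpProg {P : Program α} {I J K : Set α} (hIK : I ⊆ K)
    (hJ : stableOp P K ⊆ J) : stableOp P K ⊆ stableOp (simpProg P I J) K := by
  set S := stableOp P K
  set T := stableOp (simpProg P I J) K
  suffices Tstep (progReduct P K) (S ∩ T) ⊆ S ∩ T from fun _ ha => (stableOp_subset this ha).2
  intro a ha
  obtain ⟨r, hr, rfl, hsat⟩ := mem_tstep_progReduct.1 ha
  have hsimp : r ∈ simpProg P I J :=
    ⟨hr, (sat_reduct_of_subset (Set.inter_subset_left.trans hJ) hIK r.body).1 hsat⟩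
  exact ⟨tstep_stableOp_subset P K
      (mem_tstep_progReduct.2 ⟨r, hr, rfl, sat_reduct_mono Set.inter_subset_left K hsat⟩),
    tstep_stableOp_subset _ K
      (mem_tstep_progReduct.2 ⟨r, hsimp, rfl, sat_reduct_mono Set.inter_subset_right K hsat⟩)⟩

theorem stableOp_eq_of_simpProg_subset {P Q : Program α} {I J K : Set α}
    (h1 : simpProg P I J ⊆ Q) (h2 : Q ⊆ P) (hIK : I ⊆ K) (hJ : stableOp P K ⊆ J) :
    stableOp Q K = stableOp P K :=
  (stableOp_mono h2 K).antisymm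
    ((stableOp_subset_simpProg hIK hJ).trans (stableOp_mono h1 K))

noncomputable def wfHom (P : Program α) : Set α × (Set α)ᵒᵈ →o Set α × (Set α)ᵒᵈ where
  toFun p := (stableOp P (ofDual p.2), toDual (stableOp P p.1))
  monotone' _ _ h := ⟨stableOp_anti P h.2, stableOp_anti P h.1⟩

theorem wfHom_eq_iff {P : Program α} {p : Set α × Set α} :
    wfHom P (p.1, toDual p.2) = (p.1, toDual p.2) ↔ wfOp P p = p := by
  change (stableOp P p.2, toDual (stableOp P p.1)) = (p.1, toDual p.2) ↔
    (stableOp P p.2, stableOp P p.1) = p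
  simp only [Prod.ext_iff, toDual_inj]

theorem IsWFModel.stableOp_eq {P : Program α} {I J : Set α} (h : IsWFModel P (I, J)) :
    stableOp P J = I ∧ stableOp P I = J :=
  Prod.ext_iff.1 h.1

theorem IsWFModel.fst_subset_snd {P : Program α} {I J : Set α} (h : IsWFModel P (I, J)) :
    I ⊆ J := by
  obtain ⟨hJ, hI⟩ := h.stableOp_eq
  exact (h.2 (J, I) (by simp only [wfOp, hJ, hI])).1

theorem IsWFModel.le_lfp {P : Program α} {p : Set α × Set α} (h : IsWFModel P p) :
    (p.1, toDual p.2) ≤ OrderHom.lfp (wfHom P) :=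
  h.2 _ (wfHom_eq_iff.1 (OrderHom.map_lfp (wfHom P)))

theorem isWFModel_of_le_lfp {P : Program α} {p : Set α × Set α} (hfix : wfOp P p = p)
    (hle : (p.1, toDual p.2) ≤ OrderHom.lfp (wfHom P)) : IsWFModel P p :=
  ⟨hfix, fun _ hq => hle.trans (OrderHom.lfp_le _ (wfHom_eq_iff.2 hq).le)⟩

section Simplification

variable {P Q : Program α} {I J : Set α}

theorem wfOp_eq_of_simpProg_subset (hWF : IsWFModel P (I, J)) (h1 : simpProg P I J ⊆ Q)
    (h2 : Q ⊆ P) : wfOp Q (I, J) = (I, J) := by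
  obtain ⟨hJ, hI⟩ := hWF.stableOp_eq
  have hIJ := hWF.fst_subset_snd
  exact Prod.ext ((stableOp_eq_of_simpProg_subset h1 h2 hIJ (hJ ▸ hIJ)).trans hJ)
    ((stableOp_eq_of_simpProg_subset h1 h2 subset_rfl hI.le).trans hI)

/-- The least fixpoint `m` of `Q`'s operator lies below `(I, J)`; there the operators of `P`
and `Q` agree on the first component, which makes `m` a prefixed point of `P`'s operator. -/
theorem lfp_wfHom_le_of_simpProg_subset (hWF : IsWFModel P (I, J)) (h1 : simpProg P I J ⊆ Q)
    (h2 : Q ⊆ P) : OrderHom.lfp (wfHom P) ≤ OrderHom.lfp (wfHom Q) := by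
  set m := OrderHom.lfp (wfHom Q)
  have hm : wfOp Q (m.1, ofDual m.2) = (m.1, ofDual m.2) :=
    wfHom_eq_iff.1 (OrderHom.map_lfp (wfHom Q))
  simp only [wfOp, Prod.mk.injEq] at hm
  have hmIJ : m ≤ (I, toDual J) :=
    OrderHom.lfp_le _ (wfHom_eq_iff.2 (wfOp_eq_of_simpProg_subset hWF h1 h2)).le
  have hIJ := hWF.fst_subset_snd
  have hJm : J ⊆ ofDual m.2 := hmIJ.2
  refine OrderHom.lfp_le _ ⟨?_, ?_⟩
  · have hPm : stableOp P (ofDual m.2) ⊆ J :=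
      ((stableOp_anti P hJm).trans hWF.stableOp_eq.1.le).trans hIJ
    exact (stableOp_eq_of_simpProg_subset h1 h2 (hIJ.trans hJm) hPm).symm.le.trans hm.1.le
  · exact hm.2.symm.le.trans (stableOp_mono h2 m.1)

end Simplification

/-- Any program between `P^{I,J}` and `P` has the same well-founded model as `P`. -/
theorem stmt15 {α : Type} (P Q : Program α) (I J : Set α)
    (hWF : IsWFModel P (I, J)) (h1 : simpProg P I J ⊆ Q) (h2 : Q ⊆ P) :
    IsWFModel Q (I, J) :=
  isWFModel_of_le_lfp (wfOp_eq_of_simpProg_subset hWF h1 h2)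
    (hWF.le_lfp.trans (lfp_wfHom_le_of_simpProg_subset hWF h1 h2))
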